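/- Let n ≥ 3 be odd and a_1,…,a_{n−1} positive integers; set l_k = a_1 + ⋯ + a_k and N = l_{n−1} + 1 (so [a_1,…,a_{n−1},2] has N triangles). Then F[a_1,…,a_{n−1},2] = (1 + y_N)·F[a_1,…,a_{n−1}] + (Π_{i=l_{n−2}}^{N} y_i)·F[a_1,…,a_{n−2}], and F[a_1,…,a_{n−1},2] = (1 + y_N)·F[a_1,…,a_{n−1},1] − (Π_{i=l_{n−2}}^{N−1} y_i)·F[a_1,…,a_{n−2}]. -/

import Mathlib

/-!
Ancestral triangles of continued fractions (Yamada / Farey diagrams),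
following "Cluster variables and Alexander polynomials of 2-bridge knots".
-/

noncomputable section

open scoped BigOperators

attribute [local instance] Classical.propDecidable

namespace TwoBridge

/-- The continued fraction `[a₁,…,aₙ] = 1/(a₁ + 1/(a₂ + ⋯ + 1/aₙ))`. -/
def cf : List ℕ → ℚ
  | [] => 0
  | a :: t => 1 / ((a : ℚ) + cf t)

/-- Partial sums `l_k = a₁ + ⋯ + a_k`. -/
def ell (a : List ℕ) (k : ℕ) : ℕ := (a.take k).sum

/-- The index of the fan containing the `i`-th triangle (1-based): the least `k` with
`i ≤ l_k − 1`.  Fan 1 consists of `T_1, …, T_{a₁−1}` and, for `k ≥ 2`, fan `k` consists of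
`T_{l_{k−1}}, …, T_{l_k − 1}`. -/
def fanIdx (a : List ℕ) (i : ℕ) : ℕ := sInf {k | i < ell a k}

/-- The `i`-th triangle (1-based) of the ancestral triangle of `[a₁,…,aₙ]` is a *right*
triangle iff it lies in an odd-indexed fan (first `a₁ − 1` triangles are right, the next
`a₂` left, the next `a₃` right, and so on alternately). -/
def isRight (a : List ℕ) (i : ℕ) : Prop := Odd (fanIdx a i)

/-- Vertex indices of the ancestral triangle: `0 ↦ 0/1`, `1 ↦ 1/1`, and `j + 1 ↦` the apex
(new vertex) of the triangle `T_j`.  `edgeIdx a i` is the pair of vertex indices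
(left endpoint, right endpoint) of the most recently created edge after stacking `i`
triangles; the triangle `T_{i+1}` is stacked on this edge. -/
def edgeIdx (a : List ℕ) : ℕ → ℕ × ℕ
  | 0 => (0, 1)
  | i + 1 => if isRight a (i + 1) then ((edgeIdx a i).1, i + 2) else (i + 2, (edgeIdx a i).2)

/-- The labels (numerator, denominator) of the endpoints of the active edge after stacking
`i` triangles; the new vertex of each triangle is labelled by the mediant of the two
endpoints of the edge it is stacked on. -/
def edgeLbl (a : List ℕ) : ℕ → (ℕ × ℕ) × (ℕ × ℕ)
  | 0 => ((0, 1), (1, 1))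
  | i + 1 =>
      if isRight a (i + 1) then
        ((edgeLbl a i).1,
          ((edgeLbl a i).1.1 + (edgeLbl a i).2.1, (edgeLbl a i).1.2 + (edgeLbl a i).2.2))
      else
        (((edgeLbl a i).1.1 + (edgeLbl a i).2.1, (edgeLbl a i).1.2 + (edgeLbl a i).2.2),
          (edgeLbl a i).2)

/-- The label (numerator, denominator) of the vertex with index `v`. -/
def vtxLabel (a : List ℕ) (v : ℕ) : ℕ × ℕ :=
  if v = 0 then (0, 1)
  else if v = 1 then (1, 1)
  else ((edgeLbl a (v - 2)).1.1 + (edgeLbl a (v - 2)).2.1,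
        (edgeLbl a (v - 2)).1.2 + (edgeLbl a (v - 2)).2.2)

/-- `u` and `w` are joined by an edge of the ancestral triangle. -/
def IsEdgeAT (a : List ℕ) (u w : ℕ) : Prop :=
  (u = 0 ∧ w = 1) ∨ (u = 1 ∧ w = 0) ∨
    (2 ≤ u ∧ (w = (edgeIdx a (u - 2)).1 ∨ w = (edgeIdx a (u - 2)).2)) ∨
    (2 ≤ w ∧ (u = (edgeIdx a (w - 2)).1 ∨ u = (edgeIdx a (w - 2)).2))

/-- A step of a path: an edge of the ancestral triangle along which the denominator of the
vertex label strictly decreases. -/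
def IsStep (a : List ℕ) (u w : ℕ) : Prop :=
  IsEdgeAT a u w ∧ (vtxLabel a w).2 < (vtxLabel a u).2

/-- `IsPathFrom a s γ` : `γ` is a path of the ancestral triangle of `a` starting at the
vertex with index `s` and ending at `0/1` or `1/1`, the denominator of the label strictly
decreasing along every edge. -/
def IsPathFrom (a : List ℕ) (s : ℕ) (γ : List ℕ) : Prop :=
  γ.head? = some s ∧ (γ.getLast? = some 0 ∨ γ.getLast? = some 1) ∧ List.Chain' (IsStep a) γ

/-- The (indices of the) triangles cut off to the left of the path by a single step from
vertex `u` down to vertex `w`. -/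
def stepLeft (a : List ℕ) (u w : ℕ) : Finset ℕ :=
  if 2 ≤ u ∧ w = (edgeIdx a (u - 2)).2 then Finset.Ioc (w - 1) (u - 1) else ∅

/-- The set `S_γ` of (indices of) triangles lying on the left side of the path `γ`. -/
def pathLeftSet (a : List ℕ) (γ : List ℕ) : Finset ℕ :=
  (γ.zip γ.tail).foldr (fun p s => stepLeft a p.1 p.2 ∪ s) ∅


/-- The `F`-polynomial `F_{p/q} = Σ_{γ ∈ Γ_{p/q}} ∏_{T_i ∈ S_γ} y_i` of `p/q = [a₁,…,aₙ]`
(the variable `y_i` is `MvPolynomial.X i`; the top vertex has index `a.sum = N + 1`).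
For the empty continued fraction this gives `1`. -/
def Fpoly (a : List ℕ) : MvPolynomial ℕ ℤ :=
  ∑ᶠ γ ∈ {γ : List ℕ | IsPathFrom a a.sum γ},
    ∏ i ∈ pathLeftSet a γ, (MvPolynomial.X i : MvPolynomial ℕ ℤ)

/-- `F`-polynomial with the convention `F[a₁,…,a_{n−1},0] = F[a₁,…,a_{n−2}]`. -/
def FpolyC (l : List ℕ) : MvPolynomial ℕ ℤ :=
  if l.getLast? = some 0 then Fpoly l.dropLast.dropLast else Fpoly l


/-!
Let `F_s` be the sum over the paths starting at the vertex `s`. Splitting off the first step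
gives `F_{s+2} = F_x + y_y ⋯ y_{s+1} F_y`, where `(x, y)` is the edge that `T_{s+1}` is stacked
on, and `F_s` only sees the triangles below `s`. For `a = [a₁,…,a_{n−1}]` of even length with
`S = l_{n−1}` and `M = l_{n−2}`, the last edge of `AT(a)` is `(S, M)`, since the left fan
`n − 1` hangs from the apex `M` of the right fan `n − 2`. Appending `[1]` or `[2]` stacks one or
two right triangles on this edge, and one or two applications of the recursion give both
identities.
-/

lemma ell_mono (a : List ℕ) : Monotone (ell a) := fun _ _ h =>
  (List.take_sublist_take_left h).sum_le_sum fun _ _ => Nat.zero_le _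

lemma ell_length (a : List ℕ) : ell a a.length = a.sum := by rw [ell, List.take_length]

lemma ell_append_of_le_length {b : List ℕ} (c : List ℕ) {k : ℕ} (h : k ≤ b.length) :
    ell (b ++ c) k = ell b k := by
  rw [ell, ell, List.take_append_of_le_length h]

lemma ell_length_sub_one (a : List ℕ) : ell a (a.length - 1) = a.dropLast.sum := by
  rw [ell, List.dropLast_eq_take]

lemma ell_lt_ell_succ {a : List ℕ} (hpos : ∀ x ∈ a, 0 < x) {k : ℕ} (h : k < a.length) :
    ell a k < ell a (k + 1) := by
  rw [ell, ell, List.sum_take_succ a k h]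
  exact Nat.lt_add_of_pos_right (hpos _ (List.getElem_mem h))

lemma fanIdx_eq_succ {a : List ℕ} {i k : ℕ} (h₁ : ell a k ≤ i) (h₂ : i < ell a (k + 1)) :
    fanIdx a i = k + 1 :=
  (Nat.sInf_upward_closed_eq_succ_iff (fun _ _ hle h => h.trans_le (ell_mono a hle)) k).2
    ⟨h₂, not_lt.2 h₁⟩

lemma fanIdx_append {b : List ℕ} (c : List ℕ) {i : ℕ} (h : i < b.sum) :
    fanIdx (b ++ c) i = fanIdx b i := by
  unfold fanIdx
  congr 1
  ext k
  simp only [Set.mem_ofPred_eq]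
  rcases le_total k b.length with hk | hk
  · rw [ell_append_of_le_length c hk]
  · have hbc := ell_mono (b ++ c) hk
    have hb := ell_mono b hk
    rw [ell_append_of_le_length c le_rfl, ell_length] at hbc
    rw [ell_length] at hb
    omega

lemma isRight_append_singleton {a : List ℕ} (ha : Even a.length) {c i : ℕ} (h₁ : a.sum ≤ i)
    (h₂ : i < a.sum + c) : isRight (a ++ [c]) i := by
  have hl : ell (a ++ [c]) a.length = a.sum := by
    rw [ell_append_of_le_length _ le_rfl, ell_length]
  have hl' : ell (a ++ [c]) (a.length + 1) = a.sum + c := by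
    simpa using ell_length (a ++ [c])
  rw [isRight, fanIdx_eq_succ (hl ▸ h₁) (hl' ▸ h₂)]
  exact ha.add_one

lemma edgeIdx_succ_of_isRight {a : List ℕ} {i : ℕ} (h : isRight a (i + 1)) :
    edgeIdx a (i + 1) = ((edgeIdx a i).1, i + 2) := by
  rw [edgeIdx, if_pos h]

lemma edgeIdx_succ_of_not_isRight {a : List ℕ} {i : ℕ} (h : ¬ isRight a (i + 1)) :
    edgeIdx a (i + 1) = (i + 2, (edgeIdx a i).2) := by
  rw [edgeIdx, if_neg h]

lemma edgeIdx_append {b : List ℕ} (c : List ℕ) :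
    ∀ {i : ℕ}, i < b.sum → edgeIdx (b ++ c) i = edgeIdx b i
  | 0, _ => rfl
  | i + 1, h => by
    have hr : isRight (b ++ c) (i + 1) = isRight b (i + 1) := by
      rw [isRight, isRight, fanIdx_append c h]
    simp only [edgeIdx, hr, edgeIdx_append (b := b) c (i := i) (by omega)]

lemma edgeIdx_le (a : List ℕ) : ∀ i, (edgeIdx a i).1 ≤ i + 1 ∧ (edgeIdx a i).2 ≤ i + 1
  | 0 => by simp [edgeIdx]
  | i + 1 => by
    have := edgeIdx_le a i
    by_cases h : isRight a (i + 1)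
    · rw [edgeIdx_succ_of_isRight h]; omega
    · rw [edgeIdx_succ_of_not_isRight h]; omega

lemma edgeIdx_fst_ne_snd (a : List ℕ) : ∀ i, (edgeIdx a i).1 ≠ (edgeIdx a i).2
  | 0 => by simp [edgeIdx]
  | i + 1 => by
    have := edgeIdx_le a i
    by_cases h : isRight a (i + 1)
    · rw [edgeIdx_succ_of_isRight h]; simp only; omega
    · rw [edgeIdx_succ_of_not_isRight h]; simp only; omega

lemma edgeIdx_fst_eq_or_snd_eq_succ (a : List ℕ) :
    ∀ i, (edgeIdx a i).1 = i + 1 ∨ (edgeIdx a i).2 = i + 1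
  | 0 => Or.inr rfl
  | i + 1 => by
    by_cases h : isRight a (i + 1)
    · exact Or.inr (by rw [edgeIdx_succ_of_isRight h])
    · exact Or.inl (by rw [edgeIdx_succ_of_not_isRight h])

lemma edgeIdx_of_not_isRight {a : List ℕ} {i k : ℕ} (hik : i < k)
    (h : ∀ j, i < j → j ≤ k → ¬ isRight a j) : edgeIdx a k = (k + 1, (edgeIdx a i).2) := by
  induction k, hik using Nat.le_induction with
  | base => rw [edgeIdx_succ_of_not_isRight (h _ (by omega) le_rfl)]
  | succ k hik ih =>
    rw [edgeIdx_succ_of_not_isRight (h _ (by omega) le_rfl),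
      ih fun j hij hjk => h j hij (by omega)]

/-- The right fan `k + 1` ends in the apex `l_{k+1}`, which then stays the right endpoint
throughout the left fan `k + 2`. -/
lemma edgeIdx_ell_sub_one_of_even {a : List ℕ} {k : ℕ} (hk : Even k)
    (h₁ : ell a k < ell a (k + 1)) (h₂ : ell a (k + 1) < ell a (k + 2)) :
    edgeIdx a (ell a (k + 2) - 1) = (ell a (k + 2), ell a (k + 1)) := by
  set M := ell a (k + 1)
  set S := ell a (k + 2)
  have hM : (edgeIdx a (M - 1)).2 = M := by
    rcases Nat.eq_zero_or_pos (M - 1) with h0 | h0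
    · rw [h0]
      show 1 = M
      omega
    · obtain ⟨j, hj⟩ : ∃ j, M - 1 = j + 1 := ⟨M - 2, by omega⟩
      have hr : isRight a (j + 1) := by
        rw [isRight, ← hj, fanIdx_eq_succ (k := k) (by omega) (by omega)]
        exact hk.add_one
      rw [hj, edgeIdx_succ_of_isRight hr]
      omega
  have hleft : ∀ j, M - 1 < j → j ≤ S - 1 → ¬ isRight a j := by
    intro j hj hj'
    have hS : ell a (k + 1 + 1) = S := rfl
    rw [isRight, fanIdx_eq_succ (k := k + 1) (by omega) (by omega), Nat.not_odd_iff_even]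
    exact hk.add_one.add_one
  rw [edgeIdx_of_not_isRight (by omega) hleft, hM, Nat.sub_add_cancel (by omega)]

lemma dropLast_sum_mem_Ioo {a : List ℕ} (hpos : ∀ x ∈ a, 0 < x) (hlen : 2 ≤ a.length) :
    a.dropLast.sum ∈ Set.Ioo 0 a.sum := by
  obtain ⟨k, hk⟩ : ∃ k, a.length = k + 2 := ⟨a.length - 2, by omega⟩
  have hM : ell a (k + 1) = a.dropLast.sum := by simpa [hk] using ell_length_sub_one a
  have hS : ell a (k + 2) = a.sum := hk ▸ ell_length a
  have h₁ := ell_lt_ell_succ hpos (show k < a.length by omega)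
  have h₂ : ell a (k + 1) < ell a (k + 2) := ell_lt_ell_succ hpos (by omega)
  exact ⟨by omega, by omega⟩

lemma edgeIdx_sum_sub_one_of_even {a : List ℕ} (hpos : ∀ x ∈ a, 0 < x) (heven : Even a.length)
    (hlen : 2 ≤ a.length) : edgeIdx a (a.sum - 1) = (a.sum, a.dropLast.sum) := by
  obtain ⟨k, hk⟩ : ∃ k, a.length = k + 2 := ⟨a.length - 2, by omega⟩
  have hM : ell a (k + 1) = a.dropLast.sum := by simpa [hk] using ell_length_sub_one a
  have hS : ell a (k + 2) = a.sum := hk ▸ ell_length a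
  have hk : Even k := by simpa [hk, Nat.even_add_one] using heven
  have h := edgeIdx_ell_sub_one_of_even hk (ell_lt_ell_succ hpos (by omega))
    (ell_lt_ell_succ hpos (by omega))
  rwa [hM, hS] at h

lemma vtxLabel_edgeIdx (a : List ℕ) : ∀ i, vtxLabel a (edgeIdx a i).1 = (edgeLbl a i).1 ∧
    vtxLabel a (edgeIdx a i).2 = (edgeLbl a i).2
  | 0 => by simp [edgeIdx, edgeLbl, vtxLabel]
  | i + 1 => by
    have ih := vtxLabel_edgeIdx a i
    have hnew : vtxLabel a (i + 2) = ((edgeLbl a i).1.1 + (edgeLbl a i).2.1,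
        (edgeLbl a i).1.2 + (edgeLbl a i).2.2) := by
      simp [vtxLabel]
    by_cases h : isRight a (i + 1)
    · rw [edgeIdx, edgeLbl, if_pos h, if_pos h]
      exact ⟨ih.1, hnew⟩
    · rw [edgeIdx, edgeLbl, if_neg h, if_neg h]
      exact ⟨hnew, ih.2⟩

lemma vtxLabel_snd_add_two (a : List ℕ) (v : ℕ) :
    (vtxLabel a (v + 2)).2 = (vtxLabel a (edgeIdx a v).1).2 + (vtxLabel a (edgeIdx a v).2).2 := by
  rw [(vtxLabel_edgeIdx a v).1, (vtxLabel_edgeIdx a v).2]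
  simp [vtxLabel]

lemma vtxLabel_snd_of_le_one (a : List ℕ) {v : ℕ} (hv : v ≤ 1) : (vtxLabel a v).2 = 1 := by
  interval_cases v <;> rfl

lemma one_le_vtxLabel_snd (a : List ℕ) (v : ℕ) : 1 ≤ (vtxLabel a v).2 := by
  induction v using Nat.strong_induction_on with
  | _ v ih =>
    rcases le_or_gt v 1 with hv | hv
    · rw [vtxLabel_snd_of_le_one a hv]
    · obtain ⟨u, rfl⟩ : ∃ u, v = u + 2 := ⟨v - 2, by omega⟩
      have := edgeIdx_le a u
      have := ih _ (show (edgeIdx a u).1 < u + 2 by omega)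
      rw [vtxLabel_snd_add_two]
      omega

lemma vtxLabel_snd_mono (a : List ℕ) : Monotone fun v => (vtxLabel a v).2 := by
  refine monotone_nat_of_le_succ fun v => ?_
  rcases v with _ | u
  · simp [vtxLabel]
  · rw [vtxLabel_snd_add_two]
    have := one_le_vtxLabel_snd a (edgeIdx a u).1
    have := one_le_vtxLabel_snd a (edgeIdx a u).2
    rcases edgeIdx_fst_eq_or_snd_eq_succ a u with h | h <;> rw [h] at * <;> omega

lemma IsStep.lt {a : List ℕ} {u w : ℕ} (h : IsStep a u w) : w < u :=
  lt_of_not_ge fun hle => (vtxLabel_snd_mono a hle).not_gt h.2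

lemma isStep_add_two_iff {a : List ℕ} {s w : ℕ} :
    IsStep a (s + 2) w ↔ w = (edgeIdx a s).1 ∨ w = (edgeIdx a s).2 := by
  constructor
  · intro h
    rcases h.1 with ⟨h0, -⟩ | ⟨h1, -⟩ | ⟨-, hw⟩ | ⟨hw, hu⟩
    · omega
    · omega
    · simpa using hw
    · -- an edge up to a later vertex `w` would raise the denominator
      have := edgeIdx_le a (w - 2)
      have := h.lt
      omega
  · intro hw
    refine ⟨Or.inr (Or.inr (Or.inl ⟨le_add_self, by simpa using hw⟩)), ?_⟩
    rw [vtxLabel_snd_add_two]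
    have := one_le_vtxLabel_snd a (edgeIdx a s).1
    have := one_le_vtxLabel_snd a (edgeIdx a s).2
    rcases hw with rfl | rfl <;> omega

lemma not_isPathFrom_nil (a : List ℕ) (s : ℕ) : ¬ IsPathFrom a s [] := by
  simp [IsPathFrom]

lemma IsPathFrom.head_eq {a : List ℕ} {s u : ℕ} {t : List ℕ} (h : IsPathFrom a s (u :: t)) :
    u = s := by
  simpa using h.1

lemma isPathFrom_singleton_iff {a : List ℕ} {s u : ℕ} : IsPathFrom a s [u] ↔ u = s ∧ u ≤ 1 := by
  simp only [IsPathFrom, List.head?_cons, Option.some.injEq, List.getLast?_singleton]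
  exact and_congr_right fun _ => ⟨fun _ => by omega, fun _ => ⟨by omega, List.isChain_singleton u⟩⟩

lemma isPathFrom_cons_cons_iff {a : List ℕ} {s u w : ℕ} {t : List ℕ} :
    IsPathFrom a s (u :: w :: t) ↔ u = s ∧ IsStep a u w ∧ IsPathFrom a w (w :: t) := by
  simp only [IsPathFrom, List.head?_cons, Option.some.injEq, List.getLast?_cons_cons, true_and]
  exact and_congr_right fun _ =>
    ⟨fun ⟨hl, hc⟩ => ⟨(List.isChain_cons_cons.1 hc).1, hl, (List.isChain_cons_cons.1 hc).2⟩,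
      fun ⟨hs, hl, hc⟩ => ⟨hl, List.isChain_cons_cons.2 ⟨hs, hc⟩⟩⟩

lemma setOf_isPathFrom_of_le_one (a : List ℕ) {s : ℕ} (hs : s ≤ 1) :
    {γ | IsPathFrom a s γ} = {[s]} := by
  ext γ
  simp only [Set.mem_ofPred_eq, Set.mem_singleton_iff]
  rcases γ with _ | ⟨u, _ | ⟨w, t⟩⟩
  · simp [not_isPathFrom_nil]
  · rw [isPathFrom_singleton_iff, List.cons.injEq]
    exact ⟨fun h => ⟨h.1, rfl⟩, fun h => ⟨h.1, h.1 ▸ hs⟩⟩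
  · rw [isPathFrom_cons_cons_iff]
    simp only [List.cons.injEq, reduceCtorEq, and_false, iff_false]
    rintro ⟨rfl, h, -⟩
    have := one_le_vtxLabel_snd a w
    have := vtxLabel_snd_of_le_one a hs
    exact absurd h.2 (by omega)

lemma setOf_isPathFrom_add_two (a : List ℕ) (s : ℕ) :
    {γ | IsPathFrom a (s + 2) γ} = List.cons (s + 2) ''
      ({γ | IsPathFrom a (edgeIdx a s).1 γ} ∪ {γ | IsPathFrom a (edgeIdx a s).2 γ}) := by
  ext γ
  simp only [Set.mem_ofPred_eq, Set.mem_image, Set.mem_union]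
  constructor
  · rintro hγ
    rcases γ with _ | ⟨u, _ | ⟨w, t⟩⟩
    · exact absurd hγ (not_isPathFrom_nil a _)
    · have := isPathFrom_singleton_iff.1 hγ
      omega
    · obtain ⟨rfl, hw, hp⟩ := isPathFrom_cons_cons_iff.1 hγ
      refine ⟨w :: t, ?_, rfl⟩
      rcases isStep_add_two_iff.1 hw with hw | hw
      exacts [Or.inl (hw ▸ hp), Or.inr (hw ▸ hp)]
  · rintro ⟨_ | ⟨w, t⟩, hγ', rfl⟩
    · simp [not_isPathFrom_nil] at hγ'
    · refine isPathFrom_cons_cons_iff.2 ⟨rfl, ?_⟩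
      rcases hγ' with hp | hp
      · exact ⟨isStep_add_two_iff.2 (Or.inl hp.head_eq), hp.head_eq ▸ hp⟩
      · exact ⟨isStep_add_two_iff.2 (Or.inr hp.head_eq), hp.head_eq ▸ hp⟩

lemma finite_setOf_isPathFrom (a : List ℕ) (s : ℕ) : {γ | IsPathFrom a s γ}.Finite := by
  induction s using Nat.strong_induction_on with
  | _ s ih =>
    rcases le_or_gt s 1 with hs | hs
    · rw [setOf_isPathFrom_of_le_one a hs]
      exact Set.finite_singleton _
    · obtain ⟨s, rfl⟩ : ∃ u, s = u + 2 := ⟨s - 2, by omega⟩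
      have := edgeIdx_le a s
      rw [setOf_isPathFrom_add_two]
      exact ((ih _ (by omega)).union (ih _ (by omega))).image _

lemma mem_stepLeft {a : List ℕ} {u w x : ℕ} (h : x ∈ stepLeft a u w) : w ≤ x ∧ x < u := by
  unfold stepLeft at h
  split_ifs at h with hu
  · rw [Finset.mem_Ioc] at h
    omega
  · simp at h

lemma lt_of_mem_pathLeftSet {a : List ℕ} :
    ∀ {u : ℕ} {t : List ℕ}, List.IsChain (IsStep a) (u :: t) → ∀ x ∈ pathLeftSet a (u :: t), x < u
  | _, [], _, x, hx => by simp [pathLeftSet] at hx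
  | u, w :: t, hc, x, hx => by
    rw [List.isChain_cons_cons] at hc
    rcases Finset.mem_union.1 hx with hx | hx
    · exact (mem_stepLeft hx).2
    · exact (lt_of_mem_pathLeftSet hc.2 x hx).trans hc.1.lt

lemma prod_pathLeftSet_cons {M : Type*} [CommMonoid M] (f : ℕ → M) {a : List ℕ} {u w : ℕ}
    {γ : List ℕ} (h : IsPathFrom a w γ) :
    ∏ i ∈ pathLeftSet a (u :: γ), f i =
      (∏ i ∈ stepLeft a u w, f i) * ∏ i ∈ pathLeftSet a γ, f i := by
  obtain ⟨t, rfl⟩ : ∃ t, γ = w :: t := by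
    rcases γ with _ | ⟨v, t⟩
    · exact absurd h (not_isPathFrom_nil a w)
    · exact ⟨t, by rw [h.head_eq]⟩
  refine Finset.prod_union (Finset.disjoint_left.2 fun x hx hx' => ?_)
  have := (mem_stepLeft hx).1
  have := lt_of_mem_pathLeftSet h.2.2 x hx'
  omega

def FpolyFrom (a : List ℕ) (s : ℕ) : MvPolynomial ℕ ℤ :=
  ∑ᶠ γ ∈ {γ : List ℕ | IsPathFrom a s γ},
    ∏ i ∈ pathLeftSet a γ, (MvPolynomial.X i : MvPolynomial ℕ ℤ)

lemma Fpoly_eq_FpolyFrom (a : List ℕ) : Fpoly a = FpolyFrom a a.sum := rfl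

lemma FpolyFrom_of_le_one (a : List ℕ) {s : ℕ} (hs : s ≤ 1) : FpolyFrom a s = 1 := by
  rw [FpolyFrom, setOf_isPathFrom_of_le_one a hs, finsum_mem_singleton]
  rfl

/-- A path from `s + 2` first steps to an end of the edge `(x, y)` below it; only the step to the
right end `y` cuts triangles off to its left, namely `T_y, …, T_{s+1}`. -/
lemma FpolyFrom_add_two {a : List ℕ} {s x y : ℕ} (h : edgeIdx a s = (x, y)) :
    FpolyFrom a (s + 2) = FpolyFrom a x +
      (∏ i ∈ Finset.Ioc (y - 1) (s + 1), (MvPolynomial.X i : MvPolynomial ℕ ℤ)) *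
        FpolyFrom a y := by
  have hxy : x ≠ y := by simpa [h] using edgeIdx_fst_ne_snd a s
  have hx : stepLeft a (s + 2) x = ∅ := by simp [stepLeft, h, hxy]
  have hy : stepLeft a (s + 2) y = Finset.Ioc (y - 1) (s + 1) := by simp [stepLeft, h]
  have hdisj : Disjoint {γ | IsPathFrom a x γ} {γ | IsPathFrom a y γ} :=
    Set.disjoint_left.2 fun γ hx hy => hxy (Option.some_injective _ (hx.1.symm.trans hy.1))
  have hbranch : ∀ w, ∑ᶠ γ ∈ {γ | IsPathFrom a w γ},
      ∏ i ∈ pathLeftSet a ((s + 2) :: γ), (MvPolynomial.X i : MvPolynomial ℕ ℤ) =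
        (∏ i ∈ stepLeft a (s + 2) w, MvPolynomial.X i) * FpolyFrom a w := fun w => by
    rw [FpolyFrom, mul_finsum_mem]
    exact finsum_mem_congr rfl fun γ hγ => prod_pathLeftSet_cons _ hγ
  rw [FpolyFrom, setOf_isPathFrom_add_two, h, finsum_mem_image List.cons_injective.injOn,
    finsum_mem_union hdisj (finite_setOf_isPathFrom a x) (finite_setOf_isPathFrom a y),
    hbranch, hbranch, hx, hy, Finset.prod_empty, one_mul]

lemma FpolyFrom_append (b c : List ℕ) {s : ℕ} (hs : s ≤ b.sum) :
    FpolyFrom (b ++ c) s = FpolyFrom b s := by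
  induction s using Nat.strong_induction_on with
  | _ s ih =>
    rcases le_or_gt s 1 with hs1 | hs1
    · rw [FpolyFrom_of_le_one _ hs1, FpolyFrom_of_le_one _ hs1]
    · obtain ⟨s, rfl⟩ : ∃ u, s = u + 2 := ⟨s - 2, by omega⟩
      rcases he : edgeIdx b s with ⟨x, y⟩
      have hle := edgeIdx_le b s
      rw [he] at hle
      rw [FpolyFrom_add_two ((edgeIdx_append c (by omega)).trans he), FpolyFrom_add_two he,
        ih x (by omega) (by omega), ih y (by omega) (by omega)]

lemma FpolyFrom_append_sum (b c : List ℕ) : FpolyFrom (b ++ c) b.sum = Fpoly b :=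
  FpolyFrom_append b c le_rfl

lemma FpolyFrom_dropLast_sum (a : List ℕ) : FpolyFrom a a.dropLast.sum = Fpoly a.dropLast := by
  rcases a.eq_nil_or_concat with rfl | ⟨b, x, rfl⟩
  · rfl
  · rw [List.concat_eq_append, List.dropLast_concat]
    exact FpolyFrom_append_sum b [x]

/-- The vertex `a.sum + 1` is the apex of `T_{a.sum}`, stacked on the last edge
`(a.sum, a.dropLast.sum)` of `AT(a)`. -/
lemma FpolyFrom_append_singleton_sum_add_one {a : List ℕ} (hpos : ∀ x ∈ a, 0 < x)
    (heven : Even a.length) (hlen : 2 ≤ a.length) (c : ℕ) :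
    FpolyFrom (a ++ [c]) (a.sum + 1) = Fpoly a +
      (∏ i ∈ Finset.Icc a.dropLast.sum a.sum, (MvPolynomial.X i : MvPolynomial ℕ ℤ)) *
        Fpoly a.dropLast := by
  obtain ⟨hM, hMS⟩ := dropLast_sum_mem_Ioo hpos hlen
  have h := FpolyFrom_add_two ((edgeIdx_append [c] (by omega)).trans
    (edgeIdx_sum_sub_one_of_even hpos heven hlen))
  have hIoc : Finset.Ioc (a.dropLast.sum - 1) a.sum = Finset.Icc a.dropLast.sum a.sum := by
    ext; simp only [Finset.mem_Ioc, Finset.mem_Icc]; omega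
  rw [show a.sum - 1 + 2 = a.sum + 1 by omega, show a.sum - 1 + 1 = a.sum by omega] at h
  rw [h, hIoc, FpolyFrom_append_sum, FpolyFrom_append a [c] hMS.le, FpolyFrom_dropLast_sum]

/-- **Corollary.**  Let `n ≥ 3` be odd and `a₁,…,a_{n−1}` positive integers (the list
`as`); set `l_k = a₁ + ⋯ + a_k` and `N = l_{n−1} + 1` (so `[a₁,…,a_{n−1},2]` has `N`
triangles).  Then
`F[a₁,…,a_{n−1},2] = (1 + y_N)·F[a₁,…,a_{n−1}] + (∏_{i=l_{n−2}}^{N} y_i)·F[a₁,…,a_{n−2}]`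
and
`F[a₁,…,a_{n−1},2] = (1 + y_N)·F[a₁,…,a_{n−1},1] − (∏_{i=l_{n−2}}^{N−1} y_i)·F[a₁,…,a_{n−2}]`. -/
theorem F_polynomial_recursion_two_odd (as : List ℕ)
    (hpos : ∀ x ∈ as, 0 < x) (hodd : Odd (as.length + 1)) (h3 : 3 ≤ as.length + 1) :
    Fpoly (as ++ [2]) =
        (1 + MvPolynomial.X (as.sum + 1)) * Fpoly as +
          (∏ i ∈ Finset.Icc as.dropLast.sum (as.sum + 1),
              (MvPolynomial.X i : MvPolynomial ℕ ℤ)) * Fpoly as.dropLast ∧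
    Fpoly (as ++ [2]) =
        (1 + MvPolynomial.X (as.sum + 1)) * Fpoly (as ++ [1]) -
          (∏ i ∈ Finset.Icc as.dropLast.sum as.sum,
              (MvPolynomial.X i : MvPolynomial ℕ ℤ)) * Fpoly as.dropLast := by
  have heven : Even as.length := by simpa [Nat.odd_add_one] using hodd
  have hlen : 2 ≤ as.length := by omega
  have hF := FpolyFrom_append_singleton_sum_add_one hpos heven hlen
  obtain ⟨hM, hMS⟩ := dropLast_sum_mem_Ioo hpos hlen
  have hF1 : Fpoly (as ++ [1]) = FpolyFrom (as ++ [1]) (as.sum + 1) := by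
    rw [Fpoly_eq_FpolyFrom, List.sum_append, List.sum_singleton]
  have hedge : edgeIdx (as ++ [2]) as.sum = (as.sum, as.sum + 1) := by
    obtain ⟨r, hr⟩ : ∃ r, as.sum = r + 1 := ⟨as.sum - 1, by omega⟩
    have h := edgeIdx_sum_sub_one_of_even hpos heven hlen
    rw [hr, Nat.add_sub_cancel] at h
    rw [hr, edgeIdx_succ_of_isRight (isRight_append_singleton heven (by omega) (by omega)),
      edgeIdx_append [2] (by omega), h]
  have hF2 : Fpoly (as ++ [2]) =
      Fpoly as + MvPolynomial.X (as.sum + 1) * FpolyFrom (as ++ [2]) (as.sum + 1) := by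
    rw [Fpoly_eq_FpolyFrom, List.sum_append, List.sum_singleton, FpolyFrom_add_two hedge,
      FpolyFrom_append_sum, Nat.add_sub_cancel, Nat.Ioc_succ_singleton, Finset.prod_singleton]
  rw [hF2, hF1, hF, hF, Finset.prod_Icc_succ_top (by omega)]
  constructor <;> ring

end TwoBridge

end
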